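/- Let K ⊂ ℂ be a number field, let f(z) = ∑_{n≥0} (a_n/n!) z^n be an E-function with all coefficients a_n ∈ K, and let σ : K → ℂ be a field embedding. Then the entire function f^σ(z) = ∑_{n≥0} (σ(a_n)/n!) z^n is also an E-function. -/

import Mathlib

open scoped Nat

/-- `IsEFunction a f` : `f` is the E-function with Taylor coefficients `a n / n!`. -/
structure IsEFunction (a : ℕ → ℂ) (f : ℂ → ℂ) : Prop where
  hasSum : ∀ z : ℂ, HasSum (fun n : ℕ => a n / (n ! : ℂ) * z ^ n) (f z)
  coeff_alg : ∀ n, IsAlgebraic ℚ (a n)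
  holonomic : ∃ (μ : ℕ) (p : ℕ → Polynomial ℂ),
    (∃ i, i ≤ μ ∧ p i ≠ 0) ∧
    (∀ i, i ≤ μ → ∀ k, IsAlgebraic ℚ ((p i).coeff k)) ∧
    (∀ z : ℂ, ∑ i ∈ Finset.range (μ + 1), (p i).eval z * iteratedDeriv i f z = 0)
  conj_bound : ∃ C : ℝ, 1 ≤ C ∧ ∀ n : ℕ, ∀ x : ℂ,
    (Polynomial.aeval x) (minpoly ℚ (a n)) = 0 → ‖x‖ ≤ C ^ (n + 1)
  denom : ∃ C : ℝ, 1 ≤ C ∧ ∃ d : ℕ → ℕ,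
    (∀ n, 0 < d n) ∧ (∀ n, (d n : ℝ) ≤ C ^ (n + 1)) ∧
    ∀ n m : ℕ, m ≤ n → IsIntegral ℤ ((d n : ℂ) * a m)

/-!
The coefficients `σ (a n)` are conjugates of the `a n`: they have the same minimal polynomials over
`ℚ`, and `σ` preserves integrality, which gives the size and denominator conditions. For holonomy, extend `σ` to an
embedding `τ` of the algebraic closure of `K` in `ℂ`, which contains the coefficients of the
operator. Comparing Taylor coefficients turns `∑ pᵢ f⁽ⁱ⁾ = 0` into polynomial identities between the
coefficients of the `pᵢ` and the `a n`; applying `τ` to them shows that `∑ τ(pᵢ) g⁽ⁱ⁾ = 0`.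
-/

open Polynomial Finset

theorem Polynomial.iteratedDeriv_eval {𝕜 : Type*} [NontriviallyNormedField 𝕜] (p : 𝕜[X])
    (k : ℕ) : iteratedDeriv k (fun z => p.eval z) = fun z => (derivative^[k] p).eval z := by
  induction k with
  | zero => rfl
  | succ k ih =>
    funext z
    rw [iteratedDeriv_succ, ih, Function.iterate_succ_apply']
    exact Polynomial.deriv _

theorem Polynomial.iteratedDeriv_eval_zero {𝕜 : Type*} [NontriviallyNormedField 𝕜] (p : 𝕜[X])
    (k : ℕ) : iteratedDeriv k (fun z => p.eval z) 0 = k ! * p.coeff k := by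
  simp only [iteratedDeriv_eval, ← coeff_zero_eq_eval_zero, coeff_iterate_derivative, zero_add,
    Nat.descFactorial_self, nsmul_eq_mul]

theorem iteratedDeriv_iteratedDeriv {𝕜 F : Type*} [NontriviallyNormedField 𝕜]
    [NormedAddCommGroup F] [NormedSpace 𝕜 F] (m n : ℕ) (f : 𝕜 → F) :
    iteratedDeriv m (iteratedDeriv n f) = iteratedDeriv (m + n) f := by
  simp only [iteratedDeriv_eq_iterate, Function.iterate_add_apply]

section Entire

variable {E : Type*} [NormedAddCommGroup E] [NormedSpace ℂ E] [CompleteSpace E] {f : ℂ → E}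

theorem Differentiable.differentiable_iteratedDeriv (hf : Differentiable ℂ f) (n : ℕ) :
    Differentiable ℂ (iteratedDeriv n f) := by
  induction n with
  | zero => simpa using hf
  | succ n ih => simpa only [iteratedDeriv_succ] using ih.deriv

theorem Differentiable.eq_zero_of_iteratedDeriv_zero (hf : Differentiable ℂ f)
    (h : ∀ n, iteratedDeriv n f 0 = 0) : f = 0 := by
  funext z
  have hz := Complex.hasSum_taylorSeries_of_entire hf 0 z
  simp only [h, smul_zero] at hz
  exact hz.unique hasSum_zero

end Entire

theorem hasFPowerSeriesOnBall_ofScalars_of_hasSum {c : ℕ → ℂ} {f : ℂ → ℂ}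
    (h : ∀ z, HasSum (fun n => c n * z ^ n) (f z)) :
    HasFPowerSeriesOnBall f (FormalMultilinearSeries.ofScalars ℂ c) 0 ⊤ where
  r_le := (ENNReal.eq_top_of_forall_nnreal_le fun r =>
    FormalMultilinearSeries.le_radius_of_tendsto _ (l := 0) <| by
      simpa [FormalMultilinearSeries.ofScalars_norm] using
        (h r).summable.tendsto_atTop_zero.norm).ge
  r_pos := ENNReal.zero_lt_top
  hasSum {y} _ := by
    simpa [FormalMultilinearSeries.ofScalars_apply_eq, mul_comm] using h y

theorem iteratedDeriv_zero_eq_of_hasSum {b : ℕ → ℂ} {f : ℂ → ℂ}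
    (h : ∀ z, HasSum (fun n => b n / n ! * z ^ n) (f z)) (n : ℕ) :
    iteratedDeriv n f 0 = b n := by
  have h' := (hasFPowerSeriesOnBall_ofScalars_of_hasSum h).factorial_smul 1 n
  rw [← iteratedDeriv_eq_iteratedFDeriv] at h'
  rw [← h']
  simpa using mul_div_cancel₀ (b n) (Nat.cast_ne_zero.mpr n.factorial_ne_zero)

theorem differentiable_of_hasSum {c : ℕ → ℂ} {f : ℂ → ℂ}
    (h : ∀ z, HasSum (fun n => c n * z ^ n) (f z)) : Differentiable ℂ f := by
  simpa [differentiableOn_univ] using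
    (hasFPowerSeriesOnBall_ofScalars_of_hasSum h).differentiableOn

theorem summable_div_factorial_mul_pow {b : ℕ → ℂ} {C : ℝ} (hb : ∀ n, ‖b n‖ ≤ C ^ (n + 1))
    (z : ℂ) : Summable fun n => b n / n ! * z ^ n := by
  refine Summable.of_norm_bounded ((Real.summable_pow_div_factorial (C * ‖z‖)).mul_left C)
    fun n => ?_
  calc ‖b n / n ! * z ^ n‖ = ‖b n‖ / n ! * ‖z‖ ^ n := by simp
    _ ≤ C ^ (n + 1) / n ! * ‖z‖ ^ n := by gcongr; exact hb n
    _ = C * ((C * ‖z‖) ^ n / n !) := by ring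

/-- The Leibniz-rule expansion of `iteratedDeriv n (linearDiffOp μ p f) 0` in terms of
`b m = iteratedDeriv m f 0`, stated over any commutative semiring so that ring homomorphisms can be
applied to it. -/
noncomputable def diffOpCoeff {R : Type*} [CommSemiring R] (μ : ℕ) (p : ℕ → R[X]) (b : ℕ → R)
    (n : ℕ) : R :=
  ∑ i ∈ range (μ + 1), ∑ k ∈ range (n + 1), n.choose k * (k ! * (p i).coeff k) * b (n - k + i)

theorem map_diffOpCoeff {R S : Type*} [CommSemiring R] [CommSemiring S] (f : R →+* S) (μ : ℕ)
    (p : ℕ → R[X]) (b : ℕ → R) (n : ℕ) :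
    f (diffOpCoeff μ p b n) = diffOpCoeff μ (fun i => (p i).map f) (fun m => f (b m)) n := by
  simp [diffOpCoeff, map_sum, coeff_map]

noncomputable def linearDiffOp (μ : ℕ) (p : ℕ → ℂ[X]) (f : ℂ → ℂ) (z : ℂ) : ℂ :=
  ∑ i ∈ range (μ + 1), (p i).eval z * iteratedDeriv i f z

theorem Differentiable.linearDiffOp {f : ℂ → ℂ} (hf : Differentiable ℂ f) (μ : ℕ)
    (p : ℕ → ℂ[X]) :
    Differentiable ℂ (linearDiffOp μ p f) :=
  Differentiable.fun_sum fun i _ => (p i).differentiable.mul (hf.differentiable_iteratedDeriv i)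

theorem iteratedDeriv_linearDiffOp_zero {f : ℂ → ℂ} (hf : Differentiable ℂ f) (μ : ℕ)
    (p : ℕ → ℂ[X]) (n : ℕ) :
    iteratedDeriv n (linearDiffOp μ p f) 0 =
      diffOpCoeff μ p (fun m => iteratedDeriv m f 0) n := by
  have hp (i : ℕ) : ContDiffAt ℂ n (fun z => (p i).eval z) 0 :=
    (p i).differentiable.contDiff.contDiffAt
  have hfi (i : ℕ) : ContDiffAt ℂ n (iteratedDeriv i f) 0 :=
    (hf.differentiable_iteratedDeriv i).contDiff.contDiffAt
  unfold linearDiffOp diffOpCoeff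
  rw [iteratedDeriv_fun_sum fun i _ => (hp i).mul (hfi i)]
  refine sum_congr rfl fun i _ => ?_
  rw [iteratedDeriv_fun_mul (hp i) (hfi i)]
  refine sum_congr rfl fun k _ => ?_
  rw [iteratedDeriv_eval_zero, iteratedDeriv_iteratedDeriv]

theorem linearDiffOp_eq_zero_iff {f : ℂ → ℂ} (hf : Differentiable ℂ f) (μ : ℕ) (p : ℕ → ℂ[X]) :
    linearDiffOp μ p f = 0 ↔ ∀ n, diffOpCoeff μ p (fun m => iteratedDeriv m f 0) n = 0 := by
  simp only [← iteratedDeriv_linearDiffOp_zero hf]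
  exact ⟨fun h n => by simp [h],
    Differentiable.eq_zero_of_iteratedDeriv_zero (hf.linearDiffOp μ p)⟩

theorem linearDiffOp_congr {μ : ℕ} {p q : ℕ → ℂ[X]} (h : ∀ i ≤ μ, p i = q i) (f : ℂ → ℂ) :
    linearDiffOp μ p f = linearDiffOp μ q f := by
  funext z
  exact sum_congr rfl fun i hi => by rw [h i (Nat.lt_succ_iff.mp (mem_range.mp hi))]

theorem linearDiffOp_map_eq_zero {R : Type*} [CommRing R] {ι : R →+* ℂ}
    (hι : Function.Injective ι) (τ : R →+* ℂ) {f g : ℂ → ℂ} (hf : Differentiable ℂ f)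
    (hg : Differentiable ℂ g) {b : ℕ → R} (hfb : ∀ n, iteratedDeriv n f 0 = ι (b n))
    (hgb : ∀ n, iteratedDeriv n g 0 = τ (b n)) {μ : ℕ} {p : ℕ → R[X]}
    (hp : linearDiffOp μ (fun i => (p i).map ι) f = 0) :
    linearDiffOp μ (fun i => (p i).map τ) g = 0 := by
  rw [linearDiffOp_eq_zero_iff hf] at hp
  refine (linearDiffOp_eq_zero_iff hg μ _).mpr fun n => ?_
  have hcoeff : diffOpCoeff μ p b n = 0 :=
    hι (by rw [map_diffOpCoeff, map_zero]; simpa only [hfb] using hp n)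
  simpa only [hgb, map_diffOpCoeff, map_zero] using congrArg τ hcoeff

section Conjugates

variable {A B C : Type*} [Ring A] [Ring B] [Ring C]

theorem isIntegral_int_apply_of_injective {ι : A →+* B} (hι : Function.Injective ι)
    (σ : A →+* C) {x : A} (hx : IsIntegral ℤ (ι x)) : IsIntegral ℤ (σ x) :=
  ((isIntegral_algHom_iff ι.toIntAlgHom hι).mp hx).map σ.toIntAlgHom

variable [Algebra ℚ A] [Algebra ℚ B] [Algebra ℚ C]

theorem isAlgebraic_rat_apply_of_injective {ι : A →+* B} (hι : Function.Injective ι)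
    (σ : A →+* C) {x : A} (hx : IsAlgebraic ℚ (ι x)) : IsAlgebraic ℚ (σ x) :=
  ((isAlgebraic_algHom_iff ι.toRatAlgHom hι).mp hx).algHom σ.toRatAlgHom

end Conjugates

theorem minpoly_rat_ringHom_apply {K L : Type*} [DivisionRing K] [Ring L] [Nontrivial L]
    [Algebra ℚ K] [Algebra ℚ L] (σ : K →+* L) (x : K) : minpoly ℚ (σ x) = minpoly ℚ x :=
  minpoly.algHom_eq σ.toRatAlgHom σ.injective x

theorem RingHom.exists_comp_algebraMap_eq {K L Ω : Type*} [Field K] [Field L] [Field Ω]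
    [IsAlgClosed Ω] [Algebra K L] [Algebra.IsAlgebraic K L] (σ : K →+* Ω) :
    ∃ τ : L →+* Ω, τ.comp (algebraMap K L) = σ :=
  let _ := σ.toAlgebra
  ⟨(IsAlgClosed.lift : L →ₐ[K] Ω).toRingHom, RingHom.ext (IsAlgClosed.lift (R := K)).commutes⟩

theorem Polynomial.exists_map_algebraicClosure_eq {F E : Type*} [Field F] [Field E] [Algebra F E]
    {p : E[X]} (hp : ∀ k, IsAlgebraic F (p.coeff k)) :
    ∃ q : (algebraicClosure F E)[X], q.map (algebraMap _ E) = p :=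
  (mem_lifts p).mp <| (lifts_iff_coeff_lifts p).mpr fun k =>
    ⟨⟨_, mem_algebraicClosure_iff.mpr (hp k)⟩, rfl⟩

def IsAlgHolonomic (f : ℂ → ℂ) : Prop :=
  ∃ (μ : ℕ) (p : ℕ → ℂ[X]), (∃ i, i ≤ μ ∧ p i ≠ 0) ∧
    (∀ i, i ≤ μ → ∀ k, IsAlgebraic ℚ ((p i).coeff k)) ∧ ∀ z, linearDiffOp μ p f z = 0

theorem IsAlgHolonomic.conjugate (K : Subfield ℂ) (σ : K →+* ℂ) {a : ℕ → K} {f g : ℂ → ℂ}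
    (hf : ∀ z, HasSum (fun n => (a n : ℂ) / n ! * z ^ n) (f z))
    (hg : ∀ z, HasSum (fun n => σ (a n) / n ! * z ^ n) (g z)) (hol : IsAlgHolonomic f) :
    IsAlgHolonomic g := by
  obtain ⟨μ, p, ⟨i₀, hi₀, hp₀⟩, halg, hL⟩ := hol
  obtain ⟨τ, hτ⟩ := RingHom.exists_comp_algebraMap_eq (L := algebraicClosure K ℂ) σ
  set ι := algebraMap (algebraicClosure K ℂ) ℂ
  have hlift (i : ℕ) : ∃ q : (algebraicClosure K ℂ)[X], i ≤ μ → q.map ι = p i := by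
    by_cases hi : i ≤ μ
    · obtain ⟨q, hq⟩ := exists_map_algebraicClosure_eq fun k => (halg i hi k).tower_top K
      exact ⟨q, fun _ => hq⟩
    · exact ⟨0, (absurd · hi)⟩
  choose q hq using hlift
  have hfb (n : ℕ) : iteratedDeriv n f 0 = ι (algebraMap K _ (a n)) :=
    iteratedDeriv_zero_eq_of_hasSum hf n
  have hgb (n : ℕ) : iteratedDeriv n g 0 = τ (algebraMap K _ (a n)) :=
    (iteratedDeriv_zero_eq_of_hasSum hg n).trans (DFunLike.congr_fun hτ _).symm
  have hqf : linearDiffOp μ (fun i => (q i).map ι) f = 0 :=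
    (linearDiffOp_congr hq f).trans (funext hL)
  refine ⟨μ, fun i => (q i).map τ, ⟨i₀, hi₀, ?_⟩, fun i hi k => ?_, funext_iff.mp <|
    linearDiffOp_map_eq_zero ι.injective τ (differentiable_of_hasSum hf)
      (differentiable_of_hasSum hg) hfb hgb hqf⟩
  · refine (Polynomial.map_ne_zero_iff τ.injective).mpr fun h => hp₀ ?_
    rw [← hq i₀ hi₀, h, Polynomial.map_zero]
  · rw [coeff_map]
    refine isAlgebraic_rat_apply_of_injective ι.injective τ ?_
    simpa only [← hq i hi, coeff_map] using halg i hi k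

theorem conjugate_is_EFunction_general
    (K : Subfield ℂ)
    (a : ℕ → K) (f : ℂ → ℂ)
    (hE : IsEFunction (fun n => (a n : ℂ)) f)
    (σ : K →+* ℂ) :
    ∃ g : ℂ → ℂ, IsEFunction (fun n => σ (a n)) g := by
  have hminpoly (n : ℕ) : minpoly ℚ (σ (a n)) = minpoly ℚ (a n : ℂ) :=
    (minpoly_rat_ringHom_apply σ _).trans (minpoly_rat_ringHom_apply K.subtype _).symm
  obtain ⟨C, hC, hconj⟩ := hE.conj_bound
  have hbound (n : ℕ) : ‖σ (a n)‖ ≤ C ^ (n + 1) :=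
    hconj n _ (hminpoly n ▸ minpoly.aeval ℚ _)
  have hg (z : ℂ) := (summable_div_factorial_mul_pow hbound z).hasSum
  refine ⟨_, hg, fun n => isAlgebraic_rat_apply_of_injective K.subtype_injective σ
    (hE.coeff_alg n), IsAlgHolonomic.conjugate K σ hE.hasSum hg hE.holonomic,
    ⟨C, hC, fun n x hx => hconj n x (hminpoly n ▸ hx)⟩, ?_⟩
  obtain ⟨D, hD, d, hd_pos, hd_le, hd_int⟩ := hE.denom
  refine ⟨D, hD, d, hd_pos, hd_le, fun n m hmn => ?_⟩
  simpa using isIntegral_int_apply_of_injective K.subtype_injective σ (x := d n * a m)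
    (by simpa using hd_int n m hmn)

theorem conjugate_is_EFunction
    (K : Subfield ℂ) [FiniteDimensional ℚ K]
    (a : ℕ → K) (f : ℂ → ℂ)
    (hE : IsEFunction (fun n => (a n : ℂ)) f)
    (σ : K →+* ℂ) :
    ∃ g : ℂ → ℂ, IsEFunction (fun n => σ (a n)) g :=
  conjugate_is_EFunction_general K a f hE σ
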